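/- Let b ∈ (0,1)^n be a belief profile with b_i ≠ 1/2 for every i, and let (s^A, s^B) with price p ∈ (0,1) be a naive competitive equilibrium for b. Then: p > 1/2 if and only if the number of agents i with b_i > 1/2 is strictly greater than n/2; p < 1/2 if and only if that number is strictly less than n/2; and p = 1/2 if and only if exactly n/2 agents have b_i > 1/2. In other words, the binarized naive equilibrium price coincides with the outcome of simple majority voting on the binarized beliefs. -/

import Mathlib

/-- `(sA, sB)` together with price `p` is a naive competitive equilibrium for
the belief profile `b`. -/
def NaiveEquilibrium (n : ℕ) (b sA sB : Fin n → ℝ) (p : ℝ) : Prop :=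
  p ∈ Set.Ioo (0 : ℝ) 1 ∧
  (∀ i, sA i ∈ Set.Icc (0 : ℝ) 1 ∧ sB i ∈ Set.Icc (0 : ℝ) 1 ∧ sA i * sB i = 0) ∧
  (1 / p) * (∑ i, sA i) = (1 / (1 - p)) * (∑ i, sB i) ∧
  (∀ i, b i > p → sA i = 1 ∧ sB i = 0) ∧
  (∀ i, b i < p → sA i = 0 ∧ sB i = 1)

/-!
The market clears when `(1 - p) ∑ sA = p ∑ sB`. Agents believing more than `p` put everything
on `A` and those believing less put everything on `B`, so comparing both sides of the clearing
equation with the numbers of such agents gives `#{b > p} ≤ p n ≤ #{b ≥ p}`: the price is a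
quantile of the beliefs. With no belief equal to `1/2`, the sets `{b > 1/2}` and `{b ≥ 1/2}`
coincide, and comparing `p` with `1/2` is the same as comparing that count with `n/2`.
-/

open Finset

section CardBounds

variable {ι R : Type*} [Fintype ι] [Semiring R] [PartialOrder R] [IsOrderedRing R]
  (P : ι → Prop) [DecidablePred P] {f : ι → R}

theorem sum_le_card_filter (hf : ∀ i, f i ≤ 1) (hP : ∀ i, ¬ P i → f i = 0) :
    ∑ i, f i ≤ (#{i | P i} : R) := by
  rw [← sum_filter_of_ne fun i _ hi => not_not.mp (mt (hP i) hi)]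
  simpa using sum_le_card_nsmul _ f 1 fun i _ => hf i

theorem card_filter_le_sum (hf : ∀ i, 0 ≤ f i) (hP : ∀ i, P i → f i = 1) :
    (#{i | P i} : R) ≤ ∑ i, f i :=
  calc (#{i | P i} : R) = ∑ i with P i, f i := by
        simp [sum_congr rfl fun i hi => hP i (mem_filter.mp hi).2]
    _ ≤ ∑ i, f i := sum_le_sum_of_subset_of_nonneg (filter_subset _ _) fun i _ _ => hf i

end CardBounds

namespace NaiveEquilibrium

variable {n : ℕ} {b sA sB : Fin n → ℝ} {p : ℝ}

theorem clearing (h : NaiveEquilibrium n b sA sB p) : (1 - p) * ∑ i, sA i = p * ∑ i, sB i := by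
  obtain ⟨⟨hp0, hp1⟩, -, hclear, -⟩ := h
  have : 1 - p ≠ 0 := by linarith
  field_simp at hclear
  linarith

theorem mul_le_card_le (h : NaiveEquilibrium n b sA sB p) : p * n ≤ #{i | p ≤ b i} := by
  have hclear := h.clearing
  obtain ⟨⟨hp0, hp1⟩, hs, -, -, hB⟩ := h
  have hsA : ∑ i, sA i ≤ #{i | p ≤ b i} :=
    sum_le_card_filter _ (fun i => (hs i).1.2) fun i hi => (hB i (not_le.mp hi)).1
  have hsB : (#{i | ¬ p ≤ b i} : ℝ) ≤ ∑ i, sB i :=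
    card_filter_le_sum _ (fun i => (hs i).2.1.1) fun i hi => (hB i (not_le.mp hi)).2
  have hcard : (#{i | p ≤ b i} : ℝ) + #{i | ¬ p ≤ b i} = n := by
    exact_mod_cast (card_filter_add_card_filter_not (fun i => p ≤ b i)).trans (card_fin n)
  have hq : 0 ≤ 1 - p := by linarith
  calc p * n = p * #{i | ¬ p ≤ b i} + p * #{i | p ≤ b i} := by rw [← hcard]; ring
    _ ≤ p * ∑ i, sB i + p * #{i | p ≤ b i} := by gcongr
    _ = (1 - p) * ∑ i, sA i + p * #{i | p ≤ b i} := by rw [hclear]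
    _ ≤ (1 - p) * #{i | p ≤ b i} + p * #{i | p ≤ b i} := by gcongr
    _ = #{i | p ≤ b i} := by ring

theorem card_lt_le_mul (h : NaiveEquilibrium n b sA sB p) : #{i | p < b i} ≤ p * n := by
  have hclear := h.clearing
  obtain ⟨⟨hp0, hp1⟩, hs, -, hA, -⟩ := h
  have hsA : (#{i | p < b i} : ℝ) ≤ ∑ i, sA i :=
    card_filter_le_sum _ (fun i => (hs i).1.1) fun i hi => (hA i hi).1
  have hsB : ∑ i, sB i ≤ #{i | ¬ p < b i} :=
    sum_le_card_filter _ (fun i => (hs i).2.1.2) fun i hi => (hA i (not_not.mp hi)).2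
  have hcard : (#{i | p < b i} : ℝ) + #{i | ¬ p < b i} = n := by
    exact_mod_cast (card_filter_add_card_filter_not (fun i => p < b i)).trans (card_fin n)
  have hq : 0 ≤ 1 - p := by linarith
  calc (#{i | p < b i} : ℝ) = (1 - p) * #{i | p < b i} + p * #{i | p < b i} := by ring
    _ ≤ (1 - p) * ∑ i, sA i + p * #{i | p < b i} := by gcongr
    _ = p * ∑ i, sB i + p * #{i | p < b i} := by rw [hclear]
    _ ≤ p * #{i | ¬ p < b i} + p * #{i | p < b i} := by gcongr
    _ = p * n := by rw [← hcard]; ring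

end NaiveEquilibrium

theorem lt_iff_and_gt_iff_and_eq_iff_of_imp {α β : Type*} [LinearOrder α] [LinearOrder β]
    {a c : α} {x d : β} (hgt : c < a → d < x) (hlt : a < c → x < d) (heq : a = c → x = d) :
    (c < a ↔ d < x) ∧ (a < c ↔ x < d) ∧ (a = c ↔ x = d) := by
  rcases lt_trichotomy a c with hac | hac | hac
  · have hxd := hlt hac
    simp [hac, hac.not_gt, hac.ne, hxd, hxd.not_gt, hxd.ne]
  · have hxd := heq hac
    simp [hac, hxd]
  · have hxd := hgt hac
    simp [hac, hac.not_gt, hac.ne', hxd, hxd.not_gt, hxd.ne']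

theorem naive_equilibrium_simple_majority_general (n : ℕ) (hn : 0 < n)
    (b sA sB : Fin n → ℝ) (p : ℝ)
    (hbh : ∀ i, b i ≠ 1 / 2)
    (heq : NaiveEquilibrium n b sA sB p) :
    (p > 1 / 2 ↔ ((Finset.univ.filter fun i => b i > 1 / 2).card : ℝ) > n / 2) ∧
    (p < 1 / 2 ↔ ((Finset.univ.filter fun i => b i > 1 / 2).card : ℝ) < n / 2) ∧
    (p = 1 / 2 ↔ ((Finset.univ.filter fun i => b i > 1 / 2).card : ℝ) = n / 2) := by
  have hn' : (0 : ℝ) < n := by exact_mod_cast hn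
  apply lt_iff_and_gt_iff_and_eq_iff_of_imp
  · intro hp
    calc (n / 2 : ℝ) < p * n := by nlinarith
      _ ≤ #{i | p ≤ b i} := heq.mul_le_card_le
      _ ≤ #{i | 1 / 2 < b i} := by gcongr
  · intro hp
    calc (#{i | 1 / 2 < b i} : ℝ) ≤ #{i | p < b i} := by gcongr
      _ ≤ p * n := heq.card_lt_le_mul
      _ < n / 2 := by nlinarith
  · rintro rfl
    have hge : #{i | 1 / 2 ≤ b i} = #{i | 1 / 2 < b i} :=
      congrArg card (filter_congr fun i _ => (hbh i).symm.le_iff_lt)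
    have hlow := heq.mul_le_card_le
    rw [hge] at hlow
    exact le_antisymm (by linarith [heq.card_lt_le_mul]) (by linarith)

/-- The binarized naive equilibrium price coincides with the outcome of simple
majority voting on the binarized beliefs. -/
theorem naive_equilibrium_simple_majority (n : ℕ) (hn : 0 < n)
    (b sA sB : Fin n → ℝ) (p : ℝ)
    (hb : ∀ i, b i ∈ Set.Ioo (0 : ℝ) 1) (hbh : ∀ i, b i ≠ 1 / 2)
    (heq : NaiveEquilibrium n b sA sB p) :
    (p > 1 / 2 ↔ ((Finset.univ.filter fun i => b i > 1 / 2).card : ℝ) > n / 2) ∧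
    (p < 1 / 2 ↔ ((Finset.univ.filter fun i => b i > 1 / 2).card : ℝ) < n / 2) ∧
    (p = 1 / 2 ↔ ((Finset.univ.filter fun i => b i > 1 / 2).card : ℝ) = n / 2) :=
  naive_equilibrium_simple_majority_general n hn b sA sB p hbh heq
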